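/- arXiv:2207.05443 — 2 statements merged into one kernel-verified Lean document; each statement's English description precedes it below -/
import Mathlib

section
/- Let $(A,B)$ be a jointly Gaussian centred real random vector with $\sigma_A^2 = \mathbb{E}[A^2] > 0$, $\sigma_B^2 = \mathbb{E}[B^2]$, and covariance $\sigma_{AB}$. Then for all $0 \leq \eta < \tfrac{1}{2}\sigma_A^{-2}$, $\mathbb{E}[e^{\eta A^2}\cos B] \leq \mathbb{E}[e^{\eta A^2}]\,\mathbb{E}[\cos B]$, provided $\mathbb{E}[\cos B] \geq 0$ (note $\mathbb{E}[\cos B] = e^{-\sigma_B^2/2} > 0$ always holds). -/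
/-!
Hubbard–Stratonovich: `exp (η a²) = E[exp (S a)]` for `S ~ N(0, 2η)`, so both sides of the
inequality are Gaussian mixtures over `s` of `E[exp (s A) cos B]` and `E[exp (s A)] E[cos B]`.
Tilting `P` by `exp (s A)` leaves `B` Gaussian with the same variance `vB` but mean `s cAB`, hence
`E[exp (s A) cos B] = E[exp (s A)] exp (-vB / 2) cos (s cAB) ≤ E[exp (s A)] E[cos B]`.
The bound `η < 1 / (2 vA)` is what makes `exp (η A²)` integrable.
-/

open MeasureTheory ProbabilityTheory
open scoped NNReal

namespace ProbabilityTheory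

variable {Ω Ω' : Type*} {mΩ : MeasurableSpace Ω} {mΩ' : MeasurableSpace Ω'}

lemma map_eq_of_mgf_eq {P : Measure Ω} {Q : Measure Ω'} [IsProbabilityMeasure P]
    [IsProbabilityMeasure Q] {X : Ω → ℝ} {Y : Ω' → ℝ} (hX : AEMeasurable X P)
    (hY : AEMeasurable Y Q) (h : mgf X P = mgf Y Q) (hexp : integrableExpSet Y Q = Set.univ) :
    P.map X = Q.map Y := by
  refine Measure.ext_of_complexMGF_eq hX hY (funext fun z => eqOn_complexMGF_of_mgf h ?_)
  simp [integrableExpSet_eq_of_mgf h, hexp]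

lemma integral_cos_gaussianReal (m : ℝ) (v : ℝ≥0) :
    ∫ x, Real.cos x ∂gaussianReal m v = Real.exp (-(v : ℝ) / 2) * Real.cos m := by
  have hchar := charFun_gaussianReal (μ := m) (v := v) 1
  simp only [charFun_apply_real, Complex.ofReal_one, one_mul, one_pow, mul_one] at hchar
  have hint : Integrable (fun x : ℝ => Complex.exp (x * Complex.I)) (gaussianReal m v) :=
    (integrable_const (1 : ℝ)).mono' (by fun_prop) (ae_of_all _ fun x => by
      simp [Complex.norm_exp_ofReal_mul_I])
  calc ∫ x, Real.cos x ∂gaussianReal m v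
      = ∫ x, (Complex.exp (x * Complex.I)).re ∂gaussianReal m v := by
        simp_rw [Complex.exp_ofReal_mul_I_re]
    _ = (Complex.exp (m * Complex.I - v / 2)).re := by
        rw [← hchar]; exact integral_re hint
    _ = Real.exp (-(v : ℝ) / 2) * Real.cos m := by
        rw [Complex.exp_re]
        simp [neg_div]

lemma var_eq_of_gaussianReal_eq {m m' : ℝ} {v v' : ℝ≥0}
    (h : gaussianReal m v = gaussianReal m' v') : v = v' := by
  simpa [variance_id_gaussianReal] using congrArg (fun μ => Var[id; μ]) h

lemma integrable_exp_mul_sq_gaussianReal {v : ℝ≥0} {η : ℝ} (h : 2 * v * η < 1) :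
    Integrable (fun x => Real.exp (η * x ^ 2)) (gaussianReal 0 v) := by
  rcases eq_or_ne v 0 with rfl | hv
  · rw [gaussianReal_zero_var]
    exact integrable_dirac enorm_lt_top
  rw [gaussianReal_of_var_ne_zero _ hv, gaussianPDF_def,
    integrable_withDensity_iff_integrable_smul₀' (by fun_prop)
      (ae_of_all _ fun _ => ENNReal.ofReal_lt_top)]
  have hb : 0 < (2 * v : ℝ)⁻¹ - η := by
    rw [sub_pos, inv_eq_one_div, lt_div_iff₀ (by positivity)]; linarith
  refine ((integrable_exp_neg_mul_sq hb).const_mul (√(2 * Real.pi * v))⁻¹).congr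
    (ae_of_all _ fun x => ?_)
  dsimp only
  rw [ENNReal.toReal_ofReal (gaussianPDFReal_nonneg _ _ _), gaussianPDFReal, smul_eq_mul,
    mul_assoc _ (Real.exp _), ← Real.exp_add]
  congr 2
  field_simp
  ring

lemma integral_exp_mul_gaussianReal (v : ℝ≥0) (a : ℝ) :
    ∫ s, Real.exp (s * a) ∂gaussianReal 0 v = Real.exp (v / 2 * a ^ 2) := by
  have := mgf_gaussianReal (μ := 0) (v := v) (X := id) (p := gaussianReal 0 v) (by simp) a
  simp only [mgf, id, zero_mul, zero_add] at this
  simp_rw [mul_comm _ a, this]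
  ring_nf

section HubbardStratonovich

variable {P : Measure Ω} {X f : Ω → ℝ} {C : ℝ} (v : ℝ≥0)

lemma integrable_prod_exp_mul_mul (hX : AEMeasurable X P) (hf : AEStronglyMeasurable f P)
    (hfC : ∀ᵐ ω ∂P, ‖f ω‖ ≤ C)
    (hint : Integrable (fun ω => Real.exp (v / 2 * X ω ^ 2)) P) :
    Integrable (fun p : Ω × ℝ => Real.exp (p.2 * X p.1) * f p.1)
      (P.prod (gaussianReal 0 v)) := by
  refine (integrable_prod_iff ?_).mpr ⟨ae_of_all _ fun ω => ?_, ?_⟩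
  · exact (measurable_snd.aemeasurable.mul hX.comp_fst).exp.aestronglyMeasurable.mul hf.comp_fst
  · exact (integrable_exp_mul_gaussianReal (X ω)).mul_const (f ω) |>.congr
      (ae_of_all _ fun s => by simp only [mul_comm (X ω)])
  · simp_rw [norm_mul, Real.norm_of_nonneg (Real.exp_pos _).le, integral_mul_const,
      integral_exp_mul_gaussianReal]
    exact hint.mul_bdd hf.norm (by simpa using hfC)

variable {v} [SFinite P]

lemma integral_exp_sq_mul_eq_integral_gaussianReal (hX : AEMeasurable X P)
    (hf : AEStronglyMeasurable f P)
    (hfC : ∀ᵐ ω ∂P, ‖f ω‖ ≤ C)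
    (hint : Integrable (fun ω => Real.exp (v / 2 * X ω ^ 2)) P) :
    ∫ ω, Real.exp (v / 2 * X ω ^ 2) * f ω ∂P =
      ∫ s, ∫ ω, Real.exp (s * X ω) * f ω ∂P ∂gaussianReal 0 v := by
  rw [← integral_integral_swap (integrable_prod_exp_mul_mul v hX hf hfC hint)]
  simp_rw [integral_mul_const, integral_exp_mul_gaussianReal]

lemma integrable_integral_exp_mul_mul (hX : AEMeasurable X P) (hf : AEStronglyMeasurable f P)
    (hfC : ∀ᵐ ω ∂P, ‖f ω‖ ≤ C)
    (hint : Integrable (fun ω => Real.exp (v / 2 * X ω ^ 2)) P) :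
    Integrable (fun s => ∫ ω, Real.exp (s * X ω) * f ω ∂P) (gaussianReal 0 v) :=
  (integrable_prod_exp_mul_mul v hX hf hfC hint).integral_prod_right

end HubbardStratonovich

def IsCenteredGaussianPair (P : Measure Ω) (A B : Ω → ℝ) (vA vB cAB : ℝ) : Prop :=
  ∀ s t : ℝ, P.map (fun ω => s * A ω + t * B ω) =
    gaussianReal 0 (s ^ 2 * vA + 2 * s * t * cAB + t ^ 2 * vB).toNNReal

namespace IsCenteredGaussianPair

variable {P : Measure Ω} {A B : Ω → ℝ} {vA vB cAB : ℝ}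

lemma map_fst (h : IsCenteredGaussianPair P A B vA vB cAB) :
    P.map A = gaussianReal 0 vA.toNNReal := by
  simpa using h 1 0

lemma map_snd (h : IsCenteredGaussianPair P A B vA vB cAB) :
    P.map B = gaussianReal 0 vB.toNNReal := by
  simpa using h 0 1

lemma aemeasurable_fst (h : IsCenteredGaussianPair P A B vA vB cAB) : AEMeasurable A P :=
  aemeasurable_of_map_neZero (by rw [h.map_fst]; infer_instance)

lemma aemeasurable_snd (h : IsCenteredGaussianPair P A B vA vB cAB) : AEMeasurable B P :=
  aemeasurable_of_map_neZero (by rw [h.map_snd]; infer_instance)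

lemma quadratic_nonneg (h : IsCenteredGaussianPair P A B vA vB cAB) (hvA : 0 < vA) (s t : ℝ) :
    0 ≤ s ^ 2 * vA + 2 * s * t * cAB + t ^ 2 * vB := by
  by_contra! hneg
  have hzero : ∀ᵐ ω ∂P, s * A ω + t * B ω = 0 := by
    refine ae_of_ae_map (p := fun x => x = 0)
      (aemeasurable_of_map_neZero (by rw [h s t]; infer_instance)) ?_
    rw [h s t, Real.toNNReal_of_nonpos hneg.le, gaussianReal_zero_var, ae_dirac_eq]
    exact Filter.eventually_pure.mpr rfl
  -- So `(s ± 1) A + t B = ± A` a.s.; comparing variances at `±1` makes the form vanish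
  -- at `(s, t)`.
  have hshift : ∀ r : ℝ, r ≠ 0 →
      (s + r) ^ 2 * vA + 2 * (s + r) * t * cAB + t ^ 2 * vB = r ^ 2 * vA := by
    intro r hr
    have hlaw :
        P.map (fun ω => (s + r) * A ω + t * B ω) = P.map (fun ω => r * A ω + 0 * B ω) :=
      Measure.map_congr (hzero.mono fun ω hω => by linear_combination hω)
    rw [h, h] at hlaw
    have hvar := congrArg ((↑) : ℝ≥0 → ℝ) (var_eq_of_gaussianReal_eq hlaw)
    have hpos : 0 < r ^ 2 * vA := by positivity
    simp only [Real.coe_toNNReal', mul_zero, zero_mul, zero_pow two_ne_zero, add_zero,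
      max_eq_left hpos.le] at hvar
    rcases le_total 0 ((s + r) ^ 2 * vA + 2 * (s + r) * t * cAB + t ^ 2 * vB) with hq | hq
    · rwa [max_eq_left hq] at hvar
    · rw [max_eq_right hq] at hvar; linarith
  linarith [hshift 1 one_ne_zero, hshift (-1) (by norm_num)]

lemma mgf_snd_tilted (h : IsCenteredGaussianPair P A B vA vB cAB) (hvA : 0 < vA) (s : ℝ) :
    mgf B (P.tilted (s * A ·)) = mgf id (gaussianReal (s * cAB) vB.toNNReal) := by
  ext t
  have hjoint : ∫ ω, (Real.exp (s * A ω) / mgf A P s) • Real.exp (t * B ω) ∂P =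
      mgf (fun ω => s * A ω + t * B ω) P 1 / mgf A P s := by
    simp only [mgf, one_mul]
    rw [← integral_div]
    congr with ω
    rw [smul_eq_mul, Real.exp_add]
    ring
  rw [mgf, integral_tilted_mul_eq_mgf, hjoint, mgf_gaussianReal (h s t),
    mgf_gaussianReal h.map_fst, mgf_id_gaussianReal, ← Real.exp_sub,
    Real.coe_toNNReal _ (h.quadratic_nonneg hvA s t), Real.coe_toNNReal _ hvA.le,
    Real.coe_toNNReal _ (by simpa using h.quadratic_nonneg hvA 0 1)]
  ring_nf

variable [IsProbabilityMeasure P]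

lemma integrable_exp_mul_fst (h : IsCenteredGaussianPair P A B vA vB cAB) (s : ℝ) :
    Integrable (fun ω => Real.exp (s * A ω)) P :=
  mgf_pos_iff.mp (by rw [mgf_gaussianReal h.map_fst]; positivity)

lemma map_snd_tilted (h : IsCenteredGaussianPair P A B vA vB cAB) (hvA : 0 < vA) (s : ℝ) :
    (P.tilted (s * A ·)).map B = gaussianReal (s * cAB) vB.toNNReal := by
  have := isProbabilityMeasure_tilted (h.integrable_exp_mul_fst s)
  simpa using map_eq_of_mgf_eq (h.aemeasurable_snd.mono_ac (tilted_absolutelyContinuous _ _))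
    aemeasurable_id (h.mgf_snd_tilted hvA s) (by simp)

lemma integral_exp_mul_fst_mul_cos_snd (h : IsCenteredGaussianPair P A B vA vB cAB)
    (hvA : 0 < vA) (s : ℝ) :
    ∫ ω, Real.exp (s * A ω) * Real.cos (B ω) ∂P =
      Real.exp (s ^ 2 * vA / 2 - vB / 2) * Real.cos (s * cAB) := by
  have htilt : ∫ ω, Real.cos (B ω) ∂(P.tilted (s * A ·)) =
      (∫ ω, Real.exp (s * A ω) * Real.cos (B ω) ∂P) / mgf A P s := by
    rw [integral_tilted_mul_eq_mgf, ← integral_div]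
    congr with ω
    rw [smul_eq_mul]
    ring
  have hlaw : ∫ ω, Real.cos (B ω) ∂(P.tilted (s * A ·)) =
      Real.exp (-vB / 2) * Real.cos (s * cAB) := by
    rw [← integral_map (h.aemeasurable_snd.mono_ac (tilted_absolutelyContinuous _ _))
      Real.continuous_cos.aestronglyMeasurable, h.map_snd_tilted hvA s, integral_cos_gaussianReal,
      Real.coe_toNNReal _ (by simpa using h.quadratic_nonneg hvA 0 1)]
  rw [htilt, div_eq_iff (mgf_pos (h.integrable_exp_mul_fst s)).ne', mgf_gaussianReal h.map_fst,
    Real.coe_toNNReal _ hvA.le] at hlaw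
  rw [hlaw, zero_mul, zero_add, mul_right_comm, ← Real.exp_add]
  ring_nf

lemma integral_exp_mul_fst_mul_cos_snd_le (h : IsCenteredGaussianPair P A B vA vB cAB)
    (hvA : 0 < vA) (s : ℝ) :
    ∫ ω, Real.exp (s * A ω) * Real.cos (B ω) ∂P ≤
      (∫ ω, Real.exp (s * A ω) ∂P) * ∫ ω, Real.cos (B ω) ∂P := by
  have hcos : ∫ ω, Real.cos (B ω) ∂P = Real.exp (-vB / 2) := by
    simpa [neg_div] using h.integral_exp_mul_fst_mul_cos_snd hvA 0
  have hmgf : ∫ ω, Real.exp (s * A ω) ∂P = Real.exp (s ^ 2 * vA / 2) := by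
    rw [← mgf, mgf_gaussianReal h.map_fst, Real.coe_toNNReal _ hvA.le]
    ring_nf
  rw [h.integral_exp_mul_fst_mul_cos_snd hvA s, hcos, hmgf, sub_eq_add_neg, Real.exp_add, neg_div]
  exact mul_le_of_le_one_right (by positivity) (Real.cos_le_one _)

end IsCenteredGaussianPair
end ProbabilityTheory

/-- decorrelation inequality for a centred bivariate Gaussian `(A,B)`:
for `0 ≤ η < 1/(2 vA)`, `E[e^{ηA²} cos B] ≤ E[e^{ηA²}] E[cos B]`. -/
theorem gaussian_exp_sq_cos_le
    {Ω : Type*} [MeasurableSpace Ω] (P : Measure Ω) [IsProbabilityMeasure P]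
    (A B : Ω → ℝ) (vA vB cAB : ℝ) (hvA : 0 < vA)
    (hGauss : ∀ s t : ℝ, Measure.map (fun ω => s * A ω + t * B ω) P =
      gaussianReal 0 (s ^ 2 * vA + 2 * s * t * cAB + t ^ 2 * vB).toNNReal)
    (η : ℝ) (hη0 : 0 ≤ η) (hη : η < 1 / (2 * vA)) :
    ∫ ω, Real.exp (η * A ω ^ 2) * Real.cos (B ω) ∂P ≤
      (∫ ω, Real.exp (η * A ω ^ 2) ∂P) * ∫ ω, Real.cos (B ω) ∂P := by
  have h : IsCenteredGaussianPair P A B vA vB cAB := hGauss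
  obtain ⟨v, rfl⟩ : ∃ v : ℝ≥0, η = v / 2 := ⟨(2 * η).toNNReal, by simp [hη0]⟩
  have hA := h.aemeasurable_fst
  have hint : Integrable (fun ω => Real.exp (v / 2 * A ω ^ 2)) P := by
    have hsq := integrable_exp_mul_sq_gaussianReal (v := vA.toNNReal) (η := v / 2) (by
      rw [Real.coe_toNNReal _ hvA.le]
      rw [lt_div_iff₀ (by positivity)] at hη
      linarith)
    rw [← h.map_fst] at hsq
    exact (integrable_map_measure hsq.aestronglyMeasurable hA).mp hsq
  have hcos : AEStronglyMeasurable (fun ω => Real.cos (B ω)) P :=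
    Real.continuous_cos.comp_aestronglyMeasurable h.aemeasurable_snd.aestronglyMeasurable
  have hcos_le : ∀ᵐ ω ∂P, ‖Real.cos (B ω)‖ ≤ 1 :=
    ae_of_all _ fun ω => (Real.norm_eq_abs _).trans_le (Real.abs_cos_le_one _)
  have hone_le : ∀ᵐ ω ∂P, ‖(fun _ => (1 : ℝ)) ω‖ ≤ 1 := ae_of_all _ fun _ => by simp
  have hexp_sq :=
    integral_exp_sq_mul_eq_integral_gaussianReal hA aestronglyMeasurable_const hone_le hint
  simp only [mul_one] at hexp_sq
  calc ∫ ω, Real.exp (v / 2 * A ω ^ 2) * Real.cos (B ω) ∂P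
      = ∫ s, ∫ ω, Real.exp (s * A ω) * Real.cos (B ω) ∂P ∂gaussianReal 0 v :=
        integral_exp_sq_mul_eq_integral_gaussianReal hA hcos hcos_le hint
    _ ≤ ∫ s, (∫ ω, Real.exp (s * A ω) ∂P) * ∫ ω, Real.cos (B ω) ∂P
          ∂gaussianReal 0 v := by
        refine integral_mono (integrable_integral_exp_mul_mul hA hcos hcos_le hint) ?_
          (h.integral_exp_mul_fst_mul_cos_snd_le hvA)
        simpa using (integrable_integral_exp_mul_mul hA aestronglyMeasurable_const hone_le
          hint).mul_const (∫ ω, Real.cos (B ω) ∂P)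
    _ = (∫ ω, Real.exp (v / 2 * A ω ^ 2) ∂P) * ∫ ω, Real.cos (B ω) ∂P := by
        rw [integral_mul_const, hexp_sq]
end

section
/- Let $a < b$ in $[0,1]$ with $b - a \leq \tfrac12$ and $a, b \in 2^{-N}\mathbb{Z}$ for some $N \geq 1$. Let $n$ be minimal in $\{0,\dots,N\}$ such that some $z = k2^{-n} \in [a,b]$, and consider a dyadic decomposition $a = h_{-u} < \dots < h_0 = z < \dots < h_v = b$ where $h_i - h_{i-1}$ for $i \leq 0$ (resp. $i > 0$) is the largest power of $2$ fitting into $[a, h_i]$ (resp. $[h_{i-1}, b]$). Then every power of $2$ appears at most twice in the sequence $(h_i - h_{i-1})_{-u < i \leq v}$. -/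
open Classical in
/-- in the greedy dyadic decomposition of an interval `[a,b] ⊆ [0,1]` with
dyadic endpoints (`b - a ≤ 1/2`), built around the dyadic point `z` of minimal scale `n`
contained in `[a,b]`, every step length (a power of `2`) appears at most twice. -/
theorem dyadic_decomposition_steps_card_le_two
    (N : ℕ) (hN : 1 ≤ N) (a b : ℝ)
    (h0a : 0 ≤ a) (hb1 : b ≤ 1) (hab : a < b) (hhalf : b - a ≤ 1 / 2)
    (ha : ∃ j : ℤ, a = (j : ℝ) / 2 ^ N) (hb : ∃ j : ℤ, b = (j : ℝ) / 2 ^ N)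
    (n : ℕ) (hnN : n ≤ N) (z : ℝ)
    (hz : ∃ k : ℤ, z = (k : ℝ) / 2 ^ n)
    (hza : a ≤ z) (hzb : z ≤ b)
    (hmin : ∀ m : ℕ, m < n → ∀ k : ℤ, ¬(a ≤ (k : ℝ) / 2 ^ m ∧ (k : ℝ) / 2 ^ m ≤ b))
    (u v : ℕ) (h : ℕ → ℝ)
    (hstart : h 0 = a) (hmid : h u = z) (hend : h (u + v) = b)
    (hleft : ∀ p : ℕ, 1 ≤ p → p ≤ u → ∃ m : ℕ,
      h p - h (p - 1) = (2 : ℝ) ^ (-(m : ℤ)) ∧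
      (2 : ℝ) ^ (-(m : ℤ)) ≤ h p - a ∧ h p - a < (2 : ℝ) ^ (-(m : ℤ) + 1))
    (hright : ∀ p : ℕ, u < p → p ≤ u + v → ∃ m : ℕ,
      h p - h (p - 1) = (2 : ℝ) ^ (-(m : ℤ)) ∧
      (2 : ℝ) ^ (-(m : ℤ)) ≤ b - h (p - 1) ∧ b - h (p - 1) < (2 : ℝ) ^ (-(m : ℤ) + 1)) :
    ∀ c : ℝ, ((Finset.range (u + v)).filter (fun p => h (p + 1) - h p = c)).card ≤ 2 := by
  intro c
  -- every step is positive
  have hstep : ∀ s : ℕ, 1 ≤ s → s ≤ u + v → 0 < h s - h (s - 1) := by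
    intro s hs1 hsuv
    by_cases hsu : s ≤ u
    · obtain ⟨m, hm, -, -⟩ := hleft s hs1 hsu
      rw [hm]; positivity
    · obtain ⟨m, hm, -, -⟩ := hright s (by omega) hsuv
      rw [hm]; positivity
  -- h is monotone on 0..u+v
  have hmono : ∀ i j : ℕ, i ≤ j → j ≤ u + v → h i ≤ h j := by
    intro i j hij hj
    induction j with
    | zero =>
      have : i = 0 := by omega
      simp [this]
    | succ j ih =>
      rcases Nat.lt_or_ge i (j + 1) with hlt | hge
      · have h1 : h i ≤ h j := ih (by omega) (by omega)
        have h2 := hstep (j + 1) (by omega) hj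
        simp only [Nat.add_sub_cancel] at h2
        linarith
      · have : i = j + 1 := by omega
        rw [this]
  -- two equal steps on the left side are impossible
  have left_eq : ∀ p q : ℕ, p < q → q < u →
      h (p + 1) - h p = c → h (q + 1) - h q = c → False := by
    intro p q hpq hqu hp hq
    obtain ⟨m, hm, hm1, hm2⟩ := hleft (p + 1) (by omega) (by omega)
    obtain ⟨m', hm', hm1', hm2'⟩ := hleft (q + 1) (by omega) (by omega)
    simp only [Nat.add_sub_cancel] at hm hm'
    have hc : c = (2 : ℝ) ^ (-(m : ℤ)) := by rw [← hp, hm]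
    have hc' : c = (2 : ℝ) ^ (-(m' : ℤ)) := by rw [← hq, hm']
    have h2c : (2 : ℝ) ^ (-(m' : ℤ) + 1) = 2 * (2 : ℝ) ^ (-(m' : ℤ)) := by
      rw [zpow_add_one₀ (two_ne_zero)]; ring
    rw [← hc] at hm1
    rw [h2c, ← hc'] at hm2'
    have hmn : h (p + 1) ≤ h q := hmono (p + 1) q (by omega) (by omega)
    linarith
  -- two equal steps on the right side are impossible
  have right_eq : ∀ p q : ℕ, p < q → u ≤ p → q < u + v →
      h (p + 1) - h p = c → h (q + 1) - h q = c → False := by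
    intro p q hpq hup hquv hp hq
    obtain ⟨m, hm, hm1, hm2⟩ := hright (p + 1) (by omega) (by omega)
    obtain ⟨m', hm', hm1', hm2'⟩ := hright (q + 1) (by omega) (by omega)
    simp only [Nat.add_sub_cancel] at hm hm' hm1 hm2 hm1' hm2'
    have hc : c = (2 : ℝ) ^ (-(m : ℤ)) := by rw [← hp, hm]
    have hc' : c = (2 : ℝ) ^ (-(m' : ℤ)) := by rw [← hq, hm']
    have h2c : (2 : ℝ) ^ (-(m : ℤ) + 1) = 2 * (2 : ℝ) ^ (-(m : ℤ)) := by
      rw [zpow_add_one₀ (two_ne_zero)]; ring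
    rw [← hc'] at hm1'
    rw [h2c, ← hc] at hm2
    have hmn : h (p + 1) ≤ h q := hmono (p + 1) q (by omega) (by omega)
    linarith
  set S := (Finset.range (u + v)).filter (fun p => h (p + 1) - h p = c) with hS
  have hcard1 : (S.filter (fun p => p < u)).card ≤ 1 := by
    rw [Finset.card_le_one]
    intro p hp q hq
    simp only [hS, Finset.mem_filter, Finset.mem_range] at hp hq
    rcases lt_trichotomy p q with hlt | heq | hgt
    · exact absurd (left_eq p q hlt hq.2 hp.1.2 hq.1.2) (by simp)
    · exact heq
    · exact absurd (left_eq q p hgt hp.2 hq.1.2 hp.1.2) (by simp)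
  have hcard2 : (S.filter (fun p => ¬ p < u)).card ≤ 1 := by
    rw [Finset.card_le_one]
    intro p hp q hq
    simp only [hS, Finset.mem_filter, Finset.mem_range, not_lt] at hp hq
    rcases lt_trichotomy p q with hlt | heq | hgt
    · exact absurd (right_eq p q hlt hp.2 hq.1.1 hp.1.2 hq.1.2) (by simp)
    · exact heq
    · exact absurd (right_eq q p hgt hq.2 hp.1.1 hq.1.2 hp.1.2) (by simp)
  calc S.card = (S.filter (fun p => p < u)).card + (S.filter (fun p => ¬ p < u)).card :=
        (Finset.card_filter_add_card_filter_not (fun p => p < u)).symm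
    _ ≤ 2 := by omega
end
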